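/- arXiv:1201.3271 — 2 statements merged into one kernel-verified Lean document; each statement's English description precedes it below -/
import Mathlib

section
/- Let n,k ≥ 2 be integers and let G be a vertex-minimal graph with no odd cycles of length at most 2k-1 and chromatic number greater than n. Then for every vertex v of G, the ball of radius k-1 around v satisfies |U_{k-1}(v,G)| ≥ n(k-1)+1. -/
/-!
A vertex-minimal `G` is connected, and for `0 < i ≤ k - 1` the sphere of radius `i` around `v`
has at least `n` vertices. Otherwise colour the vertices at distance `≥ i` from `v` with `n` colours
by minimality, pick a colour `c₀` missing on the sphere, and colour the levels below `i`
alternately `c₀` and `c₁` by the parity of the distance, with `c₀` on level `i - 1`. This is proper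
because an edge inside a level `d ≤ k - 2` would close an odd walk of length `2d + 1 ≤ 2k - 3`,
which contains an odd cycle at least as short. The ball of radius `k - 1` is the disjoint union of
`{v}` and these `k - 1` spheres.
-/

/-- `G` contains no odd cycle of length at most `2k-1`. -/
def NoShortOddCycles {V : Type} (G : SimpleGraph V) (k : ℕ) : Prop :=
  ∀ (v : V) (w : G.Walk v v), w.IsCycle → Odd w.length → 2 * k - 1 < w.length

/-- The ball of radius `r` around `v` in `G`. -/
noncomputable def ball {V : Type} [Fintype V] (G : SimpleGraph V) (v : V) (r : ℕ) : Finset V :=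
  Finset.univ.filter (fun u => G.dist v u ≤ r)

open Finset
open SimpleGraph hiding ball
open SimpleGraph.Walk

namespace SimpleGraph.Walk

variable {V : Type} {G : SimpleGraph V}

theorem exists_eq_append_append_of_not_isPath {a b : V} (p : G.Walk a b) (hp : ¬ p.IsPath) :
    ∃ (x : V) (q : G.Walk a x) (c : G.Walk x x) (r : G.Walk x b),
      ¬ c.Nil ∧ p = q.append (c.append r) := by
  classical
  induction p with
  | nil => exact absurd IsPath.nil hp
  | @cons a y b h p ih =>
    by_cases hp' : p.IsPath
    · have ha : a ∈ p.support := by simpa [cons_isPath_iff, hp'] using hp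
      refine ⟨a, nil, cons h (p.takeUntil a ha), p.dropUntil a ha, not_nil_cons, ?_⟩
      simp [take_spec]
    · obtain ⟨x, q, c, r, hc, rfl⟩ := ih hp'
      exact ⟨x, cons h q, c, r, hc, rfl⟩

theorem exists_isCycle_odd_length_le {u : V} (w : G.Walk u u) (hw : Odd w.length) :
    ∃ (x : V) (c : G.Walk x x), c.IsCycle ∧ Odd c.length ∧ c.length ≤ w.length := by
  induction hl : w.length using Nat.strong_induction_on generalizing u with
  | _ L ih =>
  subst hl
  have hnil : ¬ w.Nil := fun h => by simp [length_eq_zero_iff.mpr h] at hw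
  by_cases htail : w.tail.IsPath
  · have h1 : w.length ≠ 1 := fun h => (adj_of_length_eq_one h).ne rfl
    refine ⟨u, w, isCycle_iff_isPath_tail_and_le_length.mpr ⟨htail, ?_⟩, hw, le_rfl⟩
    obtain ⟨m, hm⟩ := hw
    omega
  -- `w` splits into two shorter closed walks `c` and `c'`, one of which has odd length.
  obtain ⟨x, q, c, r, hc, hsplit⟩ := w.tail.exists_eq_append_append_of_not_isPath htail
  let c' : G.Walk x x := r.append (cons (w.adj_snd hnil) q)
  have hsum : c.length + c'.length = w.length := by
    rw [← length_tail_add_one hnil, hsplit]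
    simp only [c', length_append, length_cons]
    omega
  have hc0 : 0 < c.length := not_nil_iff_lt_length.mp hc
  have hc'0 : 0 < c'.length := by simp [c']
  obtain ⟨d, hdodd, hdlt⟩ : ∃ d : G.Walk x x, Odd d.length ∧ d.length < w.length := by
    rcases Nat.even_or_odd c.length with heven | hodd
    · exact ⟨c', (Nat.odd_add'.mp (hsum ▸ hw)).mpr heven, by omega⟩
    · exact ⟨c, hodd, by omega⟩
  obtain ⟨y, e, he, heodd, helen⟩ := ih _ hdlt d hdodd rfl
  exact ⟨y, e, he, heodd, helen.trans hdlt.le⟩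

end SimpleGraph.Walk

namespace NoShortOddCycles

variable {V : Type} {G : SimpleGraph V} {k : ℕ}

theorem of_embedding {W : Type} {H : SimpleGraph W} (hG : NoShortOddCycles G k) (f : H ↪g G) :
    NoShortOddCycles H k := by
  intro v w hw hodd
  have hc := hw.map (f := f.toHom) f.injective
  rw [← length_map f.toHom w] at hodd ⊢
  exact hG _ _ hc hodd

theorem dist_ne_of_adj (hG : NoShortOddCycles G k) (hconn : G.Preconnected) {v x y : V}
    (hxy : G.Adj x y) (hx : G.dist v x + 2 ≤ k) : G.dist v x ≠ G.dist v y := by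
  intro heq
  obtain ⟨p, hp⟩ := (hconn v x).exists_walk_length_eq_dist
  obtain ⟨q, hq⟩ := (hconn v y).exists_walk_length_eq_dist
  let w : G.Walk v v := (p.concat hxy).append q.reverse
  have hw : w.length = 2 * G.dist v x + 1 := by
    simp only [w, length_append, length_concat, length_reverse]
    omega
  obtain ⟨z, c, hc, hcodd, hclen⟩ :=
    w.exists_isCycle_odd_length_le (hw ▸ odd_two_mul_add_one _)
  have := hG z c hc hcodd
  omega

end NoShortOddCycles

noncomputable def sphere {V : Type} [Fintype V] (G : SimpleGraph V) (v : V) (r : ℕ) : Finset V :=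
  univ.filter (fun u => G.dist v u = r)

namespace SimpleGraph

variable {V : Type} {G : SimpleGraph V} {n : ℕ}

theorem preconnected_of_forall_colorable_induce (hchr : ¬ G.Colorable n)
    (hcrit : ∀ (s : Set V) (x : V), x ∉ s → (G.induce s).Colorable n) : G.Preconnected := by
  by_contra hconn
  obtain ⟨u, w, huw⟩ : ∃ u w, ¬ G.Reachable u w := by simpa [Preconnected] using hconn
  refine hchr (colorable_iff_forall_connectedComponent.mpr fun C => ?_)
  by_cases hu : u ∈ C.supp
  · exact hcrit C.supp w fun hw => huw (ConnectedComponent.exact (hu.trans hw.symm))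
  · exact hcrit C.supp u hu

theorem nonempty_coloring_of_coloring_induce_dist_ge {α : Type*} {v : V} {i : ℕ}
    (hlevel : ∀ x y, G.Adj x y → G.dist v x < i → G.dist v x ≠ G.dist v y)
    (C : (G.induce {u | i ≤ G.dist v u}).Coloring α) {c₀ c₁ : α} (hc : c₀ ≠ c₁)
    (hc₀ : ∀ u (hu : i ≤ G.dist v u), G.dist v u = i → C ⟨u, hu⟩ ≠ c₀) :
    Nonempty (G.Coloring α) := by
  classical
  refine ⟨Coloring.mk (fun x => if h : i ≤ G.dist v x then C ⟨x, h⟩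
    else if (G.dist v x + i) % 2 = 1 then c₀ else c₁) fun {x y} hxy => ?_⟩
  have hdist := hxy.diff_dist_adj (u := v)
  by_cases hx : i ≤ G.dist v x <;> by_cases hy : i ≤ G.dist v y
  · simp only [hx, hy, dif_pos]
    exact C.valid hxy
  · simp only [hx, hy, dif_pos, dif_neg, not_false_iff, show (G.dist v y + i) % 2 = 1 by omega,
      if_true]
    exact hc₀ x hx (by omega)
  · simp only [hx, hy, dif_pos, dif_neg, not_false_iff, show (G.dist v x + i) % 2 = 1 by omega,
      if_true]
    exact (hc₀ y hy (by omega)).symm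
  · have hne := hlevel x y hxy (by omega)
    simp only [hx, hy, dif_neg, not_false_iff]
    split_ifs <;> first | omega | exact hc | exact hc.symm

theorem le_card_sphere [Fintype V] (hn : 2 ≤ n) (hchr : ¬ G.Colorable n)
    (hcrit : ∀ (s : Set V) (x : V), x ∉ s → (G.induce s).Colorable n) {v : V} {i : ℕ} (hi : 0 < i)
    (hlevel : ∀ x y, G.Adj x y → G.dist v x < i → G.dist v x ≠ G.dist v y) :
    n ≤ (sphere G v i).card := by
  classical
  by_contra! hcard
  obtain ⟨C⟩ := hcrit {u | i ≤ G.dist v u} v (by simpa using hi.ne')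
  let f : V → Fin n := fun u => if h : i ≤ G.dist v u then C ⟨u, h⟩ else ⟨0, by omega⟩
  obtain ⟨c₀, -, hc₀⟩ := exists_mem_notMem_of_card_lt_card
    (s := (sphere G v i).image f) (t := univ) (card_image_le.trans_lt (by simpa using hcard))
  obtain ⟨c₁, hc₁⟩ := Fintype.exists_ne_of_one_lt_card (by simp; omega) c₀
  refine hchr (nonempty_coloring_of_coloring_induce_dist_ge hlevel C hc₁.symm fun u hu hui => ?_)
  refine fun h => hc₀ (mem_image.mpr ⟨u, by simpa [sphere] using hui, ?_⟩)
  simpa [f, hu] using h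

end SimpleGraph

section Ball

variable {V : Type} [Fintype V] {G : SimpleGraph V}

theorem card_ball_succ (v : V) (r : ℕ) :
    (ball G v (r + 1)).card = (ball G v r).card + (sphere G v (r + 1)).card := by
  classical
  rw [ball, ball, sphere, ← card_union_of_disjoint (disjoint_filter.mpr fun u _ h => by omega)]
  congr 1
  ext u
  simp only [mem_union, mem_filter, mem_univ, true_and]
  omega

theorem mul_add_one_le_card_ball {n : ℕ} {v : V} {r : ℕ}
    (hsphere : ∀ i, 0 < i → i ≤ r → n ≤ (sphere G v i).card) :
    n * r + 1 ≤ (ball G v r).card := by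
  induction r with
  | zero => exact card_pos.mpr ⟨v, by simp [ball]⟩
  | succ r ih =>
    rw [card_ball_succ, Nat.mul_succ]
    have := hsphere (r + 1) r.succ_pos le_rfl
    have := ih fun i hi hir => hsphere i hi (hir.trans r.le_succ)
    omega

end Ball

theorem stmt_5_general {V : Type} [Fintype V] (G : SimpleGraph V) (n k : ℕ)
    (hn : 2 ≤ n)
    (hG : NoShortOddCycles G k) (hchr : ¬ G.Colorable n)
    (hmin : ∀ (W : Type) (_ : Fintype W) (H : SimpleGraph W),
      NoShortOddCycles H k → Fintype.card W < Fintype.card V → H.Colorable n)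
    (v : V) :
    n * (k - 1) + 1 ≤ (ball G v (k - 1)).card := by
  classical
  have hcrit : ∀ (s : Set V) (x : V), x ∉ s → (G.induce s).Colorable n := fun s x hx =>
    hmin s inferInstance _ (hG.of_embedding (Embedding.induce s)) (Fintype.card_subtype_lt hx)
  have hconn := preconnected_of_forall_colorable_induce hchr hcrit
  refine mul_add_one_le_card_ball fun i hi hik => le_card_sphere hn hchr hcrit hi ?_
  exact fun x y hxy hx => hG.dist_ne_of_adj hconn hxy (by omega)

theorem stmt_5 {V : Type} [Fintype V] (G : SimpleGraph V) (n k : ℕ)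
    (hn : 2 ≤ n) (hk : 2 ≤ k)
    (hG : NoShortOddCycles G k) (hchr : ¬ G.Colorable n)
    (hmin : ∀ (W : Type) (_ : Fintype W) (H : SimpleGraph W),
      NoShortOddCycles H k → Fintype.card W < Fintype.card V → H.Colorable n)
    (v : V) :
    n * (k - 1) + 1 ≤ (ball G v (k - 1)).card :=
  stmt_5_general G n k hn hG hchr hmin v
end

section
/- Let n,k ≥ 2 be integers, let G be a vertex-minimal graph with no odd cycles of length at most 2k-1 and chromatic number greater than n, and let d = max_{v ∈ V} |U_{k-1}(v,G)|. Then the number of vertices of G satisfies |V| ≥ f(n-1,k) + d + 1. -/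
/-- `f n k` : the largest `f` such that every finite graph with at most `f` vertices
containing no odd cycle of length at most `2k-1` is properly `n`-colorable. -/
noncomputable def fOdd (n k : ℕ) : ℕ :=
  sSup {f : ℕ | ∀ (V : Type) (_ : Fintype V) (G : SimpleGraph V),
    NoShortOddCycles G k → Fintype.card V ≤ f → G.Colorable n}
/-!
Pick `v` whose ball `B` of radius `k - 1` has the maximal size `d`. If the vertices at distance at
least `k` from `v` could be `(n-1)`-coloured, colour `B` by the parity of the distance to `v`,
giving the sphere of radius `k - 1` a fresh `n`-th colour: this is proper because an edge inside
`B` between two vertices at equal distance would close an odd cycle of length at most `2k - 1`.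
So `G` minus `B` is a graph on `|V| - d` vertices without short odd cycles and not
`(n-1)`-colourable, whence `f(n-1, k) < |V| - d`.
-/

open SimpleGraph hiding ball

namespace SimpleGraph.Walk

variable {V : Type*} {G : SimpleGraph V}

theorem exists_odd_isCycle_or_exists_isPath {u v : V} (p : G.Walk u v) :
    (∃ (x : V) (c : G.Walk x x), c.IsCycle ∧ Odd c.length ∧ c.length ≤ p.length) ∨
      ∃ q : G.Walk u v, q.IsPath ∧ q.length ≤ p.length ∧ q.length % 2 = p.length % 2 := by
  classical
  induction p with
  | nil => exact .inr ⟨nil, .nil, le_rfl, rfl⟩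
  | @cons u w v h p ih =>
    obtain ⟨x, c, hc, hodd, hle⟩ | ⟨q, hq, hle, hpar⟩ := ih
    · exact .inl ⟨x, c, hc, hodd, by simp only [length_cons]; omega⟩
    by_cases hu : u ∈ q.support
    · have hdrop := q.length_dropUntil hu
      have htake := q.length_takeUntil hu
      have htake_le := q.length_takeUntil_le_length hu
      rcases Nat.mod_two_eq_zero_or_one (q.takeUntil u hu).length with heven | hodd
      · -- `cons h (q.takeUntil u hu)` closes up into an odd cycle.
        have hpos : (q.takeUntil u hu).length ≠ 0 := fun h0 => h.ne (eq_of_length_eq_zero h0).symm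
        refine .inl ⟨u, cons h (q.takeUntil u hu), ?_, Nat.odd_iff.mpr ?_, ?_⟩
        · rw [isCycle_iff_isPath_tail_and_le_length]
          exact ⟨by simpa using hq.takeUntil hu, by simp only [length_cons]; omega⟩
        all_goals simp only [length_cons]; omega
      · -- the even closed walk `cons h (q.takeUntil u hu)` can be cut off.
        refine .inr ⟨q.dropUntil u hu, hq.dropUntil hu, ?_, ?_⟩ <;> simp only [length_cons] <;> omega
    · exact .inr ⟨cons h q, hq.cons hu, by simp only [length_cons]; omega,
        by simp only [length_cons]; omega⟩

theorem exists_odd_isCycle_of_odd_length {v : V} (p : G.Walk v v) (hp : Odd p.length) :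
    ∃ (x : V) (c : G.Walk x x), c.IsCycle ∧ Odd c.length ∧ c.length ≤ p.length := by
  refine p.exists_odd_isCycle_or_exists_isPath.resolve_right ?_
  rintro ⟨q, hq, -, hpar⟩
  rw [length_eq_zero_iff.mpr (isPath_iff_nil.mp hq), Nat.odd_iff] at *
  omega

end SimpleGraph.Walk

variable {V W : Type} {G : SimpleGraph V} {k n : ℕ}

theorem NoShortOddCycles.comap {H : SimpleGraph W} (hG : NoShortOddCycles G k) (f : H ↪g G) :
    NoShortOddCycles H k := by
  intro v c hc hodd
  simpa using hG _ (c.map f.toHom) (hc.map f.injective) (by simpa using hodd)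

theorem NoShortOddCycles.sub_one_lt_dist_of_adj (hG : NoShortOddCycles G k) {v u w : V}
    (hadj : G.Adj u w) (hu : G.Reachable v u) (h : G.dist v u = G.dist v w) :
    k - 1 < G.dist v u := by
  obtain ⟨p, hp⟩ := hu.exists_walk_length_eq_dist
  obtain ⟨q, hq⟩ := (hu.trans hadj.reachable).exists_walk_length_eq_dist
  have hlen : (p.append (.cons hadj q.reverse)).length = 2 * G.dist v u + 1 := by
    simp only [Walk.length_append, Walk.length_cons, Walk.length_reverse]
    omega
  obtain ⟨x, c, hc, hodd, hle⟩ :=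
    (p.append (.cons hadj q.reverse)).exists_odd_isCycle_of_odd_length (by simp [hlen])
  have := hG x c hc hodd
  have := hc.three_le_length
  omega

theorem SimpleGraph.Colorable.of_induce_of_induce_compl {s : Set V}
    (hs : ∀ ⦃u w⦄, G.Adj u w → u ∈ s → w ∈ s)
    (h₁ : (G.induce s).Colorable n) (h₂ : (G.induce sᶜ).Colorable n) : G.Colorable n := by
  classical
  obtain ⟨c₁⟩ := h₁
  obtain ⟨c₂⟩ := h₂
  refine ⟨Coloring.mk (fun u => if hu : u ∈ s then c₁ ⟨u, hu⟩ else c₂ ⟨u, hu⟩) ?_⟩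
  intro u w hadj
  by_cases hu : u ∈ s
  · have hw := hs hadj hu
    simp only [dif_pos hu, dif_pos hw]
    exact c₁.valid (by simpa using hadj)
  · have hw : w ∉ s := fun hw => hu (hs hadj.symm hw)
    simp only [dif_neg hu, dif_neg hw]
    exact c₂.valid (by simpa using hadj)

theorem NoShortOddCycles.colorable_induce_reachable (hG : NoShortOddCycles G k) (hn : 1 ≤ n)
    (v : V) (h : (G.induce {u | k - 1 < G.dist v u}).Colorable n) :
    (G.induce {u | G.Reachable v u}).Colorable (n + 1) := by
  obtain ⟨c⟩ := h
  let color : V → Fin (n + 1) := fun u =>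
    if hu : k - 1 < G.dist v u then (c ⟨u, hu⟩).castSucc
    else if G.dist v u % 2 = (k - 1) % 2 then Fin.last n else 0
  refine ⟨Coloring.mk (fun u => color u) ?_⟩
  intro ⟨u, hu⟩ ⟨w, _⟩ hadj
  have huw : G.Adj u w := by simpa using hadj
  have hdist := huw.diff_dist_adj (u := v)
  have hne := hG.sub_one_lt_dist_of_adj huw hu
  simp only [color, ne_eq]
  split_ifs with hu' hw'
  · exact fun hcw => c.valid (by simpa using huw) (Fin.castSucc_injective _ hcw)
  all_goals simp only [Fin.ext_iff, Fin.val_castSucc, Fin.val_last, Fin.val_zero]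
  all_goals omega

theorem NoShortOddCycles.not_colorable_induce_far [Fintype V] (hn : 1 ≤ n)
    (hG : NoShortOddCycles G k) (hchr : ¬ G.Colorable (n + 1))
    (hmin : ∀ (W : Type) (_ : Fintype W) (H : SimpleGraph W),
      NoShortOddCycles H k → Fintype.card W < Fintype.card V → H.Colorable (n + 1))
    (v : V) : ¬ (G.induce {u | k - 1 < G.dist v u}).Colorable n := by
  classical
  intro h
  -- `G.dist v u = 0` for unreachable `u`, so the far set lies in the component of `v`;
  -- minimality colours the rest of `G`.
  have hcard : Fintype.card ↥({u | G.Reachable v u}ᶜ : Set V) < Fintype.card V :=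
    Fintype.card_subtype_lt (x := v) (by simp)
  exact hchr <| Colorable.of_induce_of_induce_compl
    (fun _ _ hadj hu => hu.trans hadj.reachable) (hG.colorable_induce_reachable hn v h)
    (hmin _ _ _ (hG.comap (Embedding.induce _)) hcard)

theorem fOdd_lt_card [Fintype W] {H : SimpleGraph W} (hH : NoShortOddCycles H k)
    (h : ¬ H.Colorable n) : fOdd n k < Fintype.card W := by
  have hpos : Fintype.card W ≠ 0 := fun h0 =>
    h (have := Fintype.card_eq_zero_iff.mp h0; .of_isEmpty n)
  suffices fOdd n k ≤ Fintype.card W - 1 by omega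
  refine csSup_le ⟨0, fun W _ H _ h0 => ?_⟩ fun f hf => ?_
  · have := Fintype.card_eq_zero_iff.mp (Nat.le_zero.mp h0)
    exact .of_isEmpty n
  · by_contra! hlt
    exact h (hf W _ H hH (by omega))

theorem card_ball_add_card_far [Fintype V] (G : SimpleGraph V) (v : V) (r : ℕ) :
    (ball G v r).card + Fintype.card ↥{u | r < G.dist v u} = Fintype.card V := by
  classical
  rw [← Set.toFinset_card, ← Finset.card_univ, ← Finset.card_union_of_disjoint]
  · congr 1
    ext u
    simp [ball, le_or_gt]
  · rw [Finset.disjoint_left]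
    simp [ball]

theorem stmt_6_general {V : Type} [Fintype V] (G : SimpleGraph V) (n k : ℕ)
    (hn : 2 ≤ n)
    (hG : NoShortOddCycles G k) (hchr : ¬ G.Colorable n)
    (hmin : ∀ (W : Type) (_ : Fintype W) (H : SimpleGraph W),
      NoShortOddCycles H k → Fintype.card W < Fintype.card V → H.Colorable n)
    (d : ℕ) (hd : d = Finset.univ.sup (fun v : V => (ball G v (k - 1)).card)) :
    fOdd (n - 1) k + d + 1 ≤ Fintype.card V := by
  obtain ⟨m, rfl⟩ : ∃ m, n = m + 1 := ⟨n - 1, by omega⟩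
  have : Nonempty V := by
    by_contra! hV
    exact hchr (.of_isEmpty _)
  obtain ⟨v, -, hv⟩ := Finset.univ.exists_mem_eq_sup Finset.univ_nonempty
    fun v => (ball G v (k - 1)).card
  have hfar := fOdd_lt_card (hG.comap (Embedding.induce _))
    (hG.not_colorable_induce_far (by omega) hchr hmin v)
  have hcard := card_ball_add_card_far G v (k - 1)
  rw [Nat.add_sub_cancel]
  omega

theorem stmt_6 {V : Type} [Fintype V] (G : SimpleGraph V) (n k : ℕ)
    (hn : 2 ≤ n) (hk : 2 ≤ k)
    (hG : NoShortOddCycles G k) (hchr : ¬ G.Colorable n)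
    (hmin : ∀ (W : Type) (_ : Fintype W) (H : SimpleGraph W),
      NoShortOddCycles H k → Fintype.card W < Fintype.card V → H.Colorable n)
    (d : ℕ) (hd : d = Finset.univ.sup (fun v : V => (ball G v (k - 1)).card)) :
    fOdd (n - 1) k + d + 1 ≤ Fintype.card V :=
  stmt_6_general G n k hn hG hchr hmin d hd
end
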